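/- Let H : I → ℂ^{m×m} be a C^1 family of complex symmetric matrices solving the matrix Riccati equation Ḣ(t) + H(t)² = F(t) on an interval I, where F(t) is real symmetric. Then det(Im H(t)) = det(Im H(t₀)) · e^{-2 ∫_{t₀}^t tr(Re H(s)) ds} for all t, t₀ ∈ I. -/

import Mathlib

/-!
Write `H = X + iY` with `X`, `Y` real. Since `F` is real, the imaginary part of the Riccati
equation reads `Ẏ = -(XY + YX)`. By Jacobi's formula,
`(det Y)' = tr (adj Y · Ẏ) = -2 tr X · det Y`, a scalar linear ODE for `det Y` whose solution
is the claimed exponential.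
-/

open Set

namespace Matrix

section Complex

variable {l m n : Type*} [Fintype m]

theorem map_im_mul (A : Matrix l m ℂ) (B : Matrix m n ℂ) :
    (A * B).map Complex.im =
      A.map Complex.re * B.map Complex.im + A.map Complex.im * B.map Complex.re := by
  ext i j
  simp [mul_apply, Complex.im_sum, Finset.sum_add_distrib]

theorem re_trace (A : Matrix m m ℂ) : A.trace.re = (A.map Complex.re).trace := by
  simp [trace, Complex.re_sum]

end Complex

variable {n R : Type*} [Fintype n] [DecidableEq n] [CommRing R]

theorem sum_det_updateCol_eq_trace_adjugate_mul (Y M : Matrix n n R) :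
    ∑ i, (Y.updateCol i fun r => M r i).det = (Y.adjugate * M).trace := by
  simp only [trace, diag, mul_apply]
  refine Finset.sum_congr rfl fun i _ => ?_
  rw [← cramer_apply, cramer_eq_adjugate_mulVec]
  simp [mulVec, dotProduct]

theorem trace_adjugate_mul_add_mul_self (X Y : Matrix n n R) :
    (Y.adjugate * (X * Y + Y * X)).trace = 2 * X.trace * Y.det := by
  rw [Matrix.mul_add, trace_add, ← Matrix.mul_assoc, trace_mul_cycle Y.adjugate X Y,
    ← Matrix.mul_assoc, mul_adjugate, adjugate_mul]
  simp only [smul_mul, Matrix.one_mul, trace_smul, smul_eq_mul]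
  ring

theorem hasDerivAt_det {𝕜 𝔸 : Type*} [NontriviallyNormedField 𝕜] [NormedCommRing 𝔸]
    [NormedAlgebra 𝕜 𝔸] {Y : 𝕜 → Matrix n n 𝔸} {M : Matrix n n 𝔸} {x : 𝕜}
    (hY : ∀ i j, HasDerivAt (fun t => Y t i j) (M i j) x) :
    HasDerivAt (fun t => (Y t).det) ((Y x).adjugate * M).trace x := by
  simp only [det_apply']
  refine (HasDerivAt.fun_sum fun σ _ =>
    (HasDerivAt.fun_finsetProd fun i _ => hY (σ i) i).const_mul
      ((Equiv.Perm.sign σ : ℤ) : 𝔸)).congr_deriv ?_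
  rw [← sum_det_updateCol_eq_trace_adjugate_mul]
  simp only [det_apply', smul_eq_mul, Finset.mul_sum]
  rw [Finset.sum_comm]
  refine Finset.sum_congr rfl fun i _ => Finset.sum_congr rfl fun σ _ => ?_
  rw [← Finset.mul_prod_erase _ _ (Finset.mem_univ i), updateCol_self,
    Finset.prod_congr rfl fun j hj => updateCol_ne (i := σ j) (Finset.ne_of_mem_erase hj)]
  ring

end Matrix

theorem eq_mul_exp_integral_of_hasDerivWithinAt {a y : ℝ → ℝ} {t₀ t : ℝ}
    (ha : ContinuousOn a (uIcc t₀ t))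
    (hy : ∀ x ∈ uIcc t₀ t, HasDerivWithinAt y (a x * y x) (uIcc t₀ t) x) :
    y t = y t₀ * Real.exp (∫ s in t₀..t, a s) := by
  set g : ℝ → ℝ := fun x => y x * Real.exp (-∫ s in t₀..x, a s)
  have hg : ∀ x ∈ uIcc t₀ t, HasDerivWithinAt g 0 (uIcc t₀ t) x := by
    intro x hx
    have hsub : uIcc t₀ x ⊆ uIcc t₀ t := uIcc_subset_uIcc left_mem_uIcc hx
    have hA : HasDerivWithinAt (fun u => ∫ s in t₀..u, a s) (a x) (uIcc t₀ t) x :=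
      haveI : Fact (x ∈ uIcc t₀ t) := ⟨hx⟩
      intervalIntegral.integral_hasDerivWithinAt_right (ha.mono hsub).intervalIntegrable
        (ha.stronglyMeasurableAtFilter_nhdsWithin measurableSet_uIcc x) (ha x hx)
    refine ((hy x hx).mul hA.neg.exp).congr_deriv ?_
    ring
  have hconst : g t = g t₀ := by
    simpa [← dist_eq_norm, dist_le_zero] using
      (convex_uIcc t₀ t).norm_image_sub_le_of_norm_hasDerivWithin_le (C := 0) hg
        (fun _ _ => by simp) left_mem_uIcc right_mem_uIcc
  calc y t = g t * Real.exp (∫ s in t₀..t, a s) := by simp [g, mul_assoc, ← Real.exp_add]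
    _ = y t₀ * Real.exp (∫ s in t₀..t, a s) := by simp [hconst, g]

open Matrix in
theorem hasDerivAt_det_map_im_of_riccati {n : Type*} [Fintype n] [DecidableEq n]
    {H : ℝ → Matrix n n ℂ} {H' : Matrix n n ℂ} {F : Matrix n n ℝ} {x : ℝ}
    (hH : ∀ i j, HasDerivAt (fun s => H s i j) (H' i j) x)
    (hric : H' + H x * H x = F.map (↑)) :
    HasDerivAt (fun s => ((H s).map Complex.im).det)
      (-2 * (H x).trace.re * ((H x).map Complex.im).det) x := by
  set X := (H x).map Complex.re
  set Y := (H x).map Complex.im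
  have hH'im : H'.map Complex.im = -(X * Y + Y * X) := by
    rw [eq_sub_of_add_eq hric, ← map_im_mul]
    ext i j
    simp
  have hY : ∀ i j, HasDerivAt (fun s => (H s).map Complex.im i j) (H'.map Complex.im i j) x :=
    fun i j => by
      simpa [Function.comp_def] using
        (Complex.imCLM.hasFDerivAt.comp x (hH i j).hasFDerivAt).hasDerivAt
  refine (hasDerivAt_det hY).congr_deriv ?_
  rw [hH'im, Matrix.mul_neg, trace_neg, trace_adjugate_mul_add_mul_self, re_trace]
  ring

theorem stmt7_general (m : ℕ) (I : Set ℝ) (hI : I.OrdConnected)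
    (H H' : ℝ → Matrix (Fin m) (Fin m) ℂ)
    (F : ℝ → Matrix (Fin m) (Fin m) ℝ)
    (hderiv : ∀ t ∈ I, ∀ i j, HasDerivAt (fun s => H s i j) (H' t i j) t)
    (hric : ∀ t ∈ I, H' t + H t * H t = (F t).map (fun a => (a : ℂ)))
    (t₀ : ℝ) (ht₀ : t₀ ∈ I)
    (t : ℝ) (ht : t ∈ I) :
    ((H t).map Complex.im).det =
      ((H t₀).map Complex.im).det *
        Real.exp (-2 * ∫ s in t₀..t, ((H s).trace).re) := by
  have hJI : uIcc t₀ t ⊆ I := hI.uIcc_subset ht₀ ht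
  have htrace : ContinuousOn (fun s => -2 * (H s).trace.re) (uIcc t₀ t) := fun s hs =>
    (continuousAt_const.mul (Complex.continuous_re.continuousAt.comp
      (tendsto_finsetSum _ fun i _ => (hderiv s (hJI hs) i i).continuousAt))).continuousWithinAt
  rw [← intervalIntegral.integral_const_mul]
  exact eq_mul_exp_integral_of_hasDerivWithinAt htrace fun x hx =>
    (hasDerivAt_det_map_im_of_riccati (hderiv x (hJI hx)) (hric x (hJI hx))).hasDerivWithinAt

/-- For a `C¹` family of complex symmetric matrices solving the matrix Riccati equation
`Ḣ + H² = F` with `F` real symmetric and `Im H(t₀)` positive definite, one has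
`det(Im H(t)) = det(Im H(t₀)) e^{-2∫_{t₀}^t tr(Re H(s)) ds}`. -/
theorem stmt7 (m : ℕ) (I : Set ℝ) (hI : I.OrdConnected)
    (H H' : ℝ → Matrix (Fin m) (Fin m) ℂ)
    (F : ℝ → Matrix (Fin m) (Fin m) ℝ)
    (hderiv : ∀ t ∈ I, ∀ i j, HasDerivAt (fun s => H s i j) (H' t i j) t)
    (hcont : ∀ i j, ContinuousOn (fun s => H' s i j) I)
    (hric : ∀ t ∈ I, H' t + H t * H t = (F t).map (fun a => (a : ℂ)))
    (hFsymm : ∀ t ∈ I, (F t).IsSymm)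
    (hHsymm : ∀ t ∈ I, (H t).IsSymm)
    (t₀ : ℝ) (ht₀ : t₀ ∈ I)
    (hpos : ((H t₀).map Complex.im).PosDef)
    (t : ℝ) (ht : t ∈ I) :
    ((H t).map Complex.im).det =
      ((H t₀).map Complex.im).det *
        Real.exp (-2 * ∫ s in t₀..t, ((H s).trace).re) :=
  stmt7_general m I hI H H' F hderiv hric t₀ ht₀ t ht
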